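/- Let p be a prime, let N, β ≥ 1 be integers, and let f : ℤ^N → ℤ be a function with fdeg(f) < (p − 1)(N − β + 1), i.e., fdeg(f) ≤ d for some integer d with d < (p − 1)(N − β + 1). Then Σ_{x ∈ {0, 1, …, p−1}^N} f(x) ≡ 0 (mod p^β). -/

import Mathlib

/-- The difference operator `Δ_a` sending `f` to `x ↦ f (x + a) - f x`. -/
def disc {A B : Type*} [AddCommGroup A] [AddCommGroup B] (a : A) (f : A → B) : A → B :=
  fun x => f (x + a) - f x

/-- Iterated difference operator `Δ_{a_1} ⋯ Δ_{a_k} f` along a list `[a_1, …, a_k]`. -/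
def multiDisc {A B : Type*} [AddCommGroup A] [AddCommGroup B] : List A → (A → B) → (A → B)
  | [], f => f
  | a :: l, f => disc a (multiDisc l f)

/-- `FdegLE f d` says that the functional degree of `f` is at most `d`, i.e. all
`(d+1)`-fold iterated differences of `f` vanish. -/
def FdegLE {A B : Type*} [AddCommGroup A] [AddCommGroup B] (f : A → B) (d : ℕ) : Prop :=
  ∀ l : List A, l.length = d + 1 → multiDisc l f = 0

/-!
Induction on `N`. Splitting off the first coordinate and applying the Gregory–Newton formula
along `e₀ = (1, 0, …, 0)` gives
`∑_{x ∈ [0,p)^(N+1)} f x = ∑_{k < p} C(p, k+1) • ∑_{z ∈ [0,p)^N} (Δ_{e₀}^k f) (0, z)`,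
and `z ↦ (Δ_{e₀}^k f) (0, z)` has degree at most `d - k`. For `k < p - 1` the prime `p` divides
`C(p, k+1)`, so the induction hypothesis with `β - 1` suffices; for `k = p - 1` the coefficient
is `1`, but the degree has dropped by `p - 1`, which is what the induction hypothesis with the
same `β` needs.
-/

open Finset

section Differences

variable {A A' B : Type*} [AddCommGroup A] [AddCommGroup A'] [AddCommGroup B]

theorem multiDisc_zero (l : List A) : multiDisc l (0 : A → B) = 0 := by
  induction l with
  | nil => rfl
  | cons a l ih => funext x; simp [multiDisc, ih, disc]

theorem multiDisc_append (l₁ l₂ : List A) (f : A → B) :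
    multiDisc (l₁ ++ l₂) f = multiDisc l₁ (multiDisc l₂ f) := by
  induction l₁ with
  | nil => rfl
  | cons a l ih => simp only [List.cons_append, multiDisc, ih]

theorem iterate_disc_eq_multiDisc (a : A) (f : A → B) (k : ℕ) :
    (disc a)^[k] f = multiDisc (List.replicate k a) f := by
  induction k with
  | zero => rfl
  | succ k ih => rw [Function.iterate_succ_apply', ih, List.replicate_succ]; rfl

theorem disc_comp (φ : A' →+ A) (a : A') (f : A → B) : disc a (f ∘ φ) = disc (φ a) f ∘ φ := by
  funext x; simp [disc]

theorem multiDisc_comp (φ : A' →+ A) (l : List A') (f : A → B) :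
    multiDisc l (f ∘ φ) = multiDisc (l.map φ) f ∘ φ := by
  induction l with
  | nil => rfl
  | cons a l ih => simp only [multiDisc, List.map_cons, ih, disc_comp]

theorem FdegLE.multiDisc_eq_zero {f : A → B} {d : ℕ} (hf : FdegLE f d) {l : List A}
    (hl : d + 1 ≤ l.length) : multiDisc l f = 0 := by
  rw [← List.take_append_drop (l.length - (d + 1)) l, multiDisc_append,
    hf _ (by rw [List.length_drop]; omega), multiDisc_zero]

theorem FdegLE.iterate_disc_eq_zero {f : A → B} {d k : ℕ} (hf : FdegLE f d) (hk : d < k)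
    (a : A) : (disc a)^[k] f = 0 := by
  rw [iterate_disc_eq_multiDisc]
  exact hf.multiDisc_eq_zero (by simpa using hk)

theorem FdegLE.iterate_disc {f : A → B} {d : ℕ} (hf : FdegLE f d) (a : A) (k : ℕ) :
    FdegLE ((disc a)^[k] f) (d - k) := by
  intro l hl
  rw [iterate_disc_eq_multiDisc, ← multiDisc_append]
  exact hf.multiDisc_eq_zero (by simp only [List.length_append, List.length_replicate]; omega)

theorem FdegLE.comp {f : A → B} {d : ℕ} (hf : FdegLE f d) (φ : A' →+ A) :
    FdegLE (f ∘ φ) d := by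
  intro l hl
  rw [multiDisc_comp, hf _ (by rwa [List.length_map])]
  rfl

end Differences

theorem sum_range_choose_eq_choose_succ (n k : ℕ) :
    ∑ t ∈ range n, t.choose k = n.choose (k + 1) := by
  induction n with
  | zero => simp
  | succ n ih => rw [sum_range_succ, ih, Nat.choose_succ_succ' n k, add_comm]

theorem sum_range_shift_eq_sum_choose_smul_fwdDiff_iter {M G : Type*} [AddCommMonoid M]
    [AddCommGroup G] (h : M) (f : M → G) (n : ℕ) (y : M) :
    ∑ t ∈ range n, f (y + t • h) = ∑ k ∈ range n, n.choose (k + 1) • (fwdDiff h)^[k] f y := by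
  have newton : ∀ t ∈ range n,
      f (y + t • h) = ∑ k ∈ range n, t.choose k • (fwdDiff h)^[k] f y := by
    intro t ht
    rw [shift_eq_sum_fwdDiff_iter h f t y]
    refine sum_subset (by simpa using ht) fun k _ hk => ?_
    rw [Nat.choose_eq_zero_of_lt (by simpa using hk), zero_smul]
  rw [sum_congr rfl newton, sum_comm]
  simp_rw [← sum_smul, sum_range_choose_eq_choose_succ]

theorem sum_cube_succ_eq {B : Type*} [AddCommGroup B] (p N : ℕ) (f : (Fin (N + 1) → ℤ) → B) :
    ∑ x : Fin (N + 1) → Fin p, f (fun i => (x i : ℤ)) =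
      ∑ k ∈ range p, p.choose (k + 1) • ∑ z : Fin N → Fin p,
        (disc (Fin.cons 1 0 : Fin (N + 1) → ℤ))^[k] f (Fin.cons 0 fun i => (z i : ℤ)) := by
  rw [← (Fin.consEquiv fun _ => Fin p).sum_comp, Fintype.sum_prod_type, sum_comm]
  simp_rw [smul_sum]
  conv_rhs => rw [sum_comm]
  refine sum_congr rfl fun z _ => ?_
  have slice : ∀ t : Fin p, f (fun i => ((Fin.consEquiv (fun _ => Fin p) (t, z) i : ℕ) : ℤ)) =
      f (Fin.cons 0 (fun i => (z i : ℤ)) + (t : ℕ) • Fin.cons 1 0) := by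
    intro t
    congr 1
    funext i
    refine Fin.cases ?_ (fun j => ?_) i <;> simp [Fin.consEquiv]
  simp_rw [slice]
  exact (Fin.sum_univ_eq_sum_range
    (fun t => f (Fin.cons 0 (fun i => (z i : ℤ)) + t • Fin.cons 1 0)) p).trans
    (sum_range_shift_eq_sum_choose_smul_fwdDiff_iter _ _ _ _)

theorem FdegLE.prime_pow_dvd_sum_cube {p : ℕ} (hp : p.Prime) {N β d : ℕ}
    {f : (Fin N → ℤ) → ℤ} (hf : FdegLE f d)
    (hd : (d : ℤ) < ((p : ℤ) - 1) * ((N : ℤ) - β + 1)) :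
    (p : ℤ) ^ β ∣ ∑ x : Fin N → Fin p, f (fun i => (x i : ℤ)) := by
  induction N generalizing β d with
  | zero =>
    obtain rfl : β = 0 := by
      by_contra hβ
      have hp1 : (1 : ℤ) ≤ p := by exact_mod_cast hp.one_lt.le
      have : (1 : ℤ) ≤ β := by exact_mod_cast Nat.one_le_iff_ne_zero.mpr hβ
      push_cast at hd
      nlinarith
    simp
  | succ N ih =>
    rcases β with _ | β
    · simp
    let consZero : (Fin N → ℤ) →+ (Fin (N + 1) → ℤ) :=
      (Fin.consLinearEquiv ℤ fun _ => ℤ).toAddMonoidHom.comp (AddMonoidHom.inr ℤ _)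
    replace hd : (d : ℤ) < ((p : ℤ) - 1) * ((N : ℤ) - β + 1) := by
      convert hd using 2; push_cast; ring
    rw [sum_cube_succ_eq]
    refine dvd_sum fun k hk => ?_
    have hg := (hf.iterate_disc (Fin.cons 1 0) k).comp consZero
    rw [nsmul_eq_mul]
    obtain hkp | hkp : k + 1 < p ∨ k + 1 = p := by have := mem_range.mp hk; omega
    · have hcoeff : (p : ℤ) ∣ p.choose (k + 1) :=
        Int.natCast_dvd_natCast.mpr (hp.dvd_choose_self k.succ_ne_zero hkp)
      rw [pow_succ']
      exact mul_dvd_mul hcoeff (ih hg (by omega))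
    · rw [hkp, Nat.choose_self, Nat.cast_one, one_mul]
      rcases le_or_gt k d with hkd | hdk
      · refine ih hg ?_
        have hk : (k : ℤ) = p - 1 := by omega
        push_cast [hkd, hk]
        linarith
      · simp [hf.iterate_disc_eq_zero hdk]

theorem wilson_lemma_general
    (p : ℕ) (hp : p.Prime) (N β : ℕ)
    (f : (Fin N → ℤ) → ℤ)
    (hdeg : f = 0 ∨ ∃ d : ℕ, FdegLE f d ∧
      (d : ℤ) < ((p : ℤ) - 1) * ((N : ℤ) - (β : ℤ) + 1)) :
    (p : ℤ) ^ β ∣ ∑ x : Fin N → Fin p, f (fun i => (x i : ℤ)) := by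
  rcases hdeg with rfl | ⟨d, hf, hd⟩
  · simp
  · exact hf.prime_pow_dvd_sum_cube hp hd

/-- **Wilson's Lemma (Lemma 3.1).** Let `p` be prime, `N, β ≥ 1`, and let `f : ℤ^N → ℤ`
satisfy `fdeg f < (p - 1)(N - β + 1)` (i.e. `f = 0`, or `fdeg f ≤ d` for some `d ∈ ℕ`
with `d < (p - 1)(N - β + 1)`). Then `∑_{x ∈ {0, …, p-1}^N} f(x) ≡ 0 (mod p^β)`. -/
theorem wilson_lemma
    (p : ℕ) (hp : p.Prime) (N β : ℕ) (hN : 1 ≤ N) (hβ : 1 ≤ β)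
    (f : (Fin N → ℤ) → ℤ)
    (hdeg : f = 0 ∨ ∃ d : ℕ, FdegLE f d ∧
      (d : ℤ) < ((p : ℤ) - 1) * ((N : ℤ) - (β : ℤ) + 1)) :
    (p : ℤ) ^ β ∣ ∑ x : Fin N → Fin p, f (fun i => (x i : ℤ)) :=
  wilson_lemma_general p hp N β f hdeg
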